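/- For all ordinals α < ε₀ and all integers n ≥ 2, m(α, n+1) > m(α, n) and m(α, n) ≥ n+1. -/

import Mathlib

/-! ## Basic Laver patterns (raw data) -/

/-- `negGet l k` is the `k`-th entry of `l` counted from the end (1-indexed),
    i.e. `l_{-k}` in the paper's notation. -/
def negGet (l : List ℕ) (k : ℕ) : ℕ := l.getD (l.length - k) 0

/-- Raw data of a basic Laver pattern: a list of rows and a list of step lengths. -/
structure Blp where
  rows : List (List ℕ)
  steps : List ℕ

namespace Blp

/-- The length (number of rows) of the pattern. -/
def n (p : Blp) : ℕ := p.rows.length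

/-- The `i`-th row (1-indexed). -/
def rowOf (p : Blp) (i : ℕ) : List ℕ := p.rows.getD (i - 1) []

/-- The step length of row `i` (1-indexed). -/
def stepOf (p : Blp) (i : ℕ) : ℕ := p.steps.getD (i - 1) 0

def lastRow (p : Blp) : List ℕ := p.rows.getLastD []

def lastStep (p : Blp) : ℕ := p.steps.getLastD 0

/-- `p` is a basic Laver pattern (blp). -/
def IsValid (p : Blp) : Prop :=
  2 ≤ p.n ∧ p.steps.length = p.n ∧
  p.rowOf 1 = [0, 1, 2] ∧ p.rowOf 2 = [0, 1, 2, 3] ∧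
  ∀ i, 1 ≤ i → i ≤ p.n →
    List.Chain' (· < ·) (p.rowOf i) ∧
    3 ≤ (p.rowOf i).length ∧
    negGet (p.rowOf i) 2 = i ∧ negGet (p.rowOf i) 1 = i + 1 ∧
    (Odd (p.rowOf i).length → p.stepOf i = ((p.rowOf i).length - 1) / 2) ∧
    ((p.rowOf i).length = 4 → p.stepOf i = 1) ∧
    (Even (p.rowOf i).length → 4 < (p.rowOf i).length →
      p.stepOf i = (p.rowOf i).length / 2 ∨ p.stepOf i = (p.rowOf i).length / 2 - 1)

/-- Delete the last row. -/
def del (p : Blp) : Blp := ⟨p.rows.dropLast, p.steps.dropLast⟩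

end Blp

/-- The partial map `ap(s,t,ℓ)` is defined. -/
def ApDefined (s t : List ℕ) (ℓ : ℕ) : Prop :=
  0 < negGet t (ℓ + 2) ∧ ℓ + 2 ≤ t.length ∧
  (∀ x ∈ s, x ≤ negGet t (ℓ + 1)) ∧
  (∀ x ∈ s, t.headD 0 ≤ x → x < negGet t (ℓ + 2) → x ∈ t)

/-- The effect of `ap(·,t,ℓ)` on a single entry. -/
def apEntry (t : List ℕ) (ℓ x : ℕ) : ℕ :=
  if x < t.headD 0 then x
  else if x < negGet t (ℓ + 2) then t.getD (t.idxOf x + ℓ) 0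
  else negGet t 2 + x - negGet t (ℓ + 2)

/-- The sequence `ap(s,t,ℓ)` (total function; meaningful when `ApDefined s t ℓ`). -/
def apF (s t : List ℕ) (ℓ : ℕ) : List ℕ := s.map (apEntry t ℓ)

namespace Blp

/-- `a = s_{n,-ℓ_n-2}` in the definition of the copying operation. -/
def copyA (p : Blp) : ℕ := negGet p.lastRow (p.lastStep + 2)

/-- `b = s_{n,-ℓ_n-1} - 1` in the definition of the copying operation. -/
def copyB (p : Blp) : ℕ := negGet p.lastRow (p.lastStep + 1) - 1

/-- `p` is copyable. -/
def Copyable (p : Blp) : Prop :=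
  3 ≤ p.n ∧
  ∀ i ≤ p.copyB - p.copyA, ApDefined (p.rowOf (p.copyA + i)) p.lastRow p.lastStep

/-- `p.Copied` (meaningful when `p` is copyable). -/
def Copied (p : Blp) : Blp :=
  ⟨p.rows.dropLast ++
     (List.range (p.copyB - p.copyA + 1)).map
       (fun i => apF (p.rowOf (p.copyA + i)) p.lastRow p.lastStep),
   p.steps.dropLast ++
     (List.range (p.copyB - p.copyA + 1)).map (fun i => p.stepOf (p.copyA + i))⟩

/-- The zero blp is the unique blp of length 2. -/
def IsZero (p : Blp) : Prop := p.n = 2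

/-- `p` is of successor type. -/
def IsSuccType (p : Blp) : Prop := p.lastRow.take 3 = [0, 1, 2] ∧ p.lastRow.length = 5

/-- `p` is of limit type. -/
def IsLimitType (p : Blp) : Prop :=
  p.lastRow.take 3 = [0, 1, 2] ∧ p.lastRow.length = 6 ∧ p.lastStep = 3

/-- Append the auxiliary row `(a, n'+1, n'+2)` (with step length 1) to `q`. -/
def eExtend (q : Blp) (a : ℕ) : Blp :=
  ⟨q.rows ++ [[a, q.n + 1, q.n + 2]], q.steps ++ [1]⟩

/-- The operation `p.E(m)` for `p` of limit or successor type. -/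
def Eop (p : Blp) : ℕ → Blp
  | 0 => p.del
  | m + 1 => (eExtend (p.Eop m) (negGet p.lastRow 3)).Copied

end Blp

/-- Row `i + r` in the completion operation `comp(p,i,T)`:
insert `t_1, …, t_{r+1}` after position `ℓ` of `s` and replace the last entry by
`i+1, …, i+r+1`. -/
def compRow (s : List ℕ) (ℓ i r : ℕ) (T : List ℕ) : List ℕ :=
  (s.take ℓ ++ T.take (r + 1) ++ s.drop ℓ).dropLast ++
    (List.range (r + 1)).map (fun j => i + 1 + j)

namespace Blp

/-- The completion operation `comp(p,i,T)`. -/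
def comp (p : Blp) (i : ℕ) (T : List ℕ) : Blp :=
  ⟨p.rows.take (i - 1) ++
     (List.range (T.length + 1)).map (fun r => compRow (p.rowOf i) (p.stepOf i) i r T) ++
     (p.rows.drop i).map (List.map (fun x => if i < x then x + T.length else x)),
   p.steps.take (i - 1) ++
     ((List.range T.length).map (fun r => p.stepOf i + r + 1) ++ [p.stepOf i + T.length]) ++
     p.steps.drop i⟩

/-- The (descending) chain `x_1, x_2, …` with `x_{r+1} = s_{x_r,-3}`, stopping
as soon as the value is `≤ lo` (that final value is not collected). -/
def descChain (p : Blp) (lo : ℕ) : ℕ → ℕ → List ℕ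
  | 0, _ => []
  | fuel + 1, x =>
    let nx := negGet (p.rowOf x) 3
    if nx ≤ lo then [] else nx :: p.descChain lo fuel nx

/-- `fullcomp(p,i)` for a suitable row `i`. -/
def fullcomp (p : Blp) (i : ℕ) : Blp :=
  p.comp i
    ((p.descChain ((p.rowOf i).getD (p.stepOf i - 1) 0)
        ((p.rowOf i).getD (p.stepOf i) 0 + 1) ((p.rowOf i).getD (p.stepOf i) 0)).reverse)

/-- The (increasing) list of indices of suitable rows (rows of odd length `≥ 5`). -/
def suitableIdx (p : Blp) : List ℕ :=
  (List.range p.n).filterMap fun j =>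
    if 5 ≤ (p.rowOf (j + 1)).length ∧ (p.rowOf (j + 1)).length % 2 = 1 then some (j + 1)
    else none

/-- The modification operation `p.M`: apply `fullcomp` to `p.Copied` at the suitable
indices of `p`, in decreasing order. -/
def Mop (p : Blp) : Blp := p.suitableIdx.reverse.foldl (fun q i => q.fullcomp i) p.Copied

end Blp

/- The graph of the partial recursive function `f(p,m)` of the paper
(`FRel p m r` means `f(p,m)` is defined with value `r`), together with the graph
`FIter q k x r` of the `k`-fold iterate of `x ↦ f(q,x)` at `x`. -/
mutual
  inductive FRel : Blp → ℕ → ℕ → Prop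
    | zero (p : Blp) (m : ℕ) : p.IsZero → FRel p m (m * 2 ^ m)
    | notCopyable (p : Blp) (m r : ℕ) :
        ¬p.IsZero → ¬p.Copyable → FRel p.del m r → FRel p m r
    | succ (p : Blp) (m r : ℕ) :
        ¬p.IsZero → p.Copyable → p.IsSuccType → FIter p.del (2 ^ m) m r → FRel p m r
    | limit (p : Blp) (m r : ℕ) :
        ¬p.IsZero → p.Copyable → ¬p.IsSuccType → p.IsLimitType →
        FRel (p.Eop m) m r → FRel p m r
    | trans (p : Blp) (m r : ℕ) :
        ¬p.IsZero → p.Copyable → ¬p.IsSuccType → ¬p.IsLimitType →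
        FRel p.Mop m r → FRel p m r
  inductive FIter : Blp → ℕ → ℕ → ℕ → Prop
    | base (q : Blp) (x : ℕ) : FIter q 0 x x
    | step (q : Blp) (k x y r : ℕ) : FIter q k x y → FRel q y r → FIter q (k + 1) x r
end

/-! ## Ordinals below ε₀ via `ONote`, fundamental sequences, pattern sequences -/

/-- `o` denotes a successor ordinal (for `o` in normal form). -/
def isSuccO : ONote → Bool
  | .zero => false
  | .oadd e _ .zero => decide (e = ONote.zero)
  | .oadd _ _ (.oadd e' c' a') => isSuccO (.oadd e' c' a')

/-- The predecessor of a (successor) ordinal notation. -/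
def predO : ONote → ONote
  | .zero => .zero
  | .oadd e c .zero => if e = ONote.zero then ONote.ofNat ((c : ℕ) - 1) else .oadd e c .zero
  | .oadd e c (.oadd e' c' a') => .oadd e c (predO (.oadd e' c' a'))

/-- The canonical fundamental sequence: `fsO o k` is `o[k]` (meaningful for `o` in
normal form denoting a limit ordinal), obtained from the unique decomposition
`o = β + ω^γ` via `(ω^(δ+1))[k] = ω^δ·k` and `(ω^γ)[k] = ω^(γ[k])` for `γ` limit. -/
def fsO : ONote → ℕ → ONote
  | .zero, _ => .zero
  | .oadd e c (.oadd e' c' a'), k => .oadd e c (fsO (.oadd e' c' a') k)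
  | .oadd e c .zero, k =>
    let t : ONote :=
      if e = ONote.zero then .zero
      else if isSuccO e then
        (if h : k = 0 then .zero else .oadd (predO e) ⟨k, Nat.pos_of_ne_zero h⟩ .zero)
      else .oadd (fsO e k) 1 .zero
    if c = 1 then t else .oadd e (c - 1) t

/-- Auxiliary for the pattern sequence: process the Cantor normal form terms of `o`
from the left, starting from the already-computed list `L`. -/
def psFrom : List ℕ → ONote → List ℕ
  | L, .zero => L
  | L, .oadd e c a =>
    let pe := psFrom [] e
    let step : List ℕ → List ℕ := fun M =>
      if e = ONote.zero then M ++ [0]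
      else M ++ [0] ++ pe.map (· + (M.length + 1)) ++ [M.length + 1]
    psFrom (step^[(c : ℕ)] L) a

/-- The pattern sequence `ps(α)` of an ordinal `α < ε₀`. -/
def psO (o : ONote) : List ℕ := psFrom [] o

/-- The fundamental sequence for `ε₀` itself: `ε₀[0] = 1`, `ε₀[n+1] = ω^(ε₀[n])`. -/
def eps0fs : ℕ → ONote
  | 0 => 1
  | k + 1 => .oadd (eps0fs k) 1 .zero

/-- The graph of the Hardy hierarchy `H_α(n)` for `α < ε₀`:
`HardyRel o n r` means `H_{repr o}(n) = r`. -/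
inductive HardyRel : ONote → ℕ → ℕ → Prop
  | zero (n : ℕ) : HardyRel 0 n n
  | succ (o : ONote) (n r : ℕ) : HardyRel o (n + 1) r → HardyRel (o + 1) n r
  | limit (o : ONote) (n r : ℕ) :
      Order.IsSuccLimit (ONote.repr o) → HardyRel (fsO o n) (n + 1) r → HardyRel o n r

/- The graph of the `m`-hierarchy `m(α,n)` for `α < ε₀` (`MRel o n r` means
`m(repr o, n) = r`), together with the graph `MIter o k x r` of the `k`-fold
iterate of `x ↦ m(repr o, x)` at `x`. -/
mutual
  inductive MRel : ONote → ℕ → ℕ → Prop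
    | zero (n : ℕ) : MRel 0 n (n ^ n)
    | succ (o : ONote) (n r : ℕ) : MIter o n n r → MRel (o + 1) n r
    | limit (o : ONote) (n r : ℕ) :
        Order.IsSuccLimit (ONote.repr o) → MRel (fsO o n) n r → MRel o n r
  inductive MIter : ONote → ℕ → ℕ → ℕ → Prop
    | base (o : ONote) (x : ℕ) : MIter o 0 x x
    | step (o : ONote) (k x y r : ℕ) : MIter o k x y → MRel o y r → MIter o (k + 1) x r
end

/-! ## The specific patterns `q_n`, `p_α` -/

/-- The blp `q_n` with `2^n + 4` rows. -/
def qBlp (n : ℕ) : Blp :=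
  ⟨[[0, 1, 2], [0, 1, 2, 3], [0, 1, 2, 3, 4]] ++
     (List.range (2 ^ n + 1)).map (fun j => [0, 1, 2, j + 3, j + 4, j + 5]),
   [1, 1, 2] ++ List.replicate (2 ^ n + 1) 3⟩

/-- The Steinhaus–Moser functions `m_k` for finite `k`. -/
def mSMfin : ℕ → ℕ → ℕ
  | 0, n => n ^ n
  | k + 1, n => (mSMfin k)^[n] n

/-- The Steinhaus–Moser functions `m_{ω+k}`; `mSMomega 0 = m_ω` with `m_ω(n) = m_n(n)`. -/
def mSMomega : ℕ → ℕ → ℕ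
  | 0, n => mSMfin n n
  | k + 1, n => (mSMomega k)^[n] n

/-- The canonical blps `p_k` for finite `k`. -/
def pFin : ℕ → Blp
  | 0 => ⟨[[0, 1, 2], [0, 1, 2, 3]], [1, 1]⟩
  | k + 1 =>
    ⟨(pFin k).rows ++ [[0, 1, 2, (pFin k).n + 1, (pFin k).n + 2]], (pFin k).steps ++ [2]⟩

/-- The canonical blps `p_{ω+k}`. -/
def pOmegaBlp : ℕ → Blp
  | 0 => ⟨[[0, 1, 2], [0, 1, 2, 3], [0, 1, 2, 3, 4], [0, 1, 2, 3, 4, 5]], [1, 1, 2, 3]⟩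
  | k + 1 =>
    ⟨(pOmegaBlp k).rows ++ [[0, 1, 2, (pOmegaBlp k).n + 1, (pOmegaBlp k).n + 2]],
     (pOmegaBlp k).steps ++ [2]⟩

/-- The canonical blps `p_α` for `α < ω + ω`, with `Sum.inl k ↦ p_k` and
`Sum.inr k ↦ p_{ω+k}`. -/
def pSM : ℕ ⊕ ℕ → Blp
  | .inl k => pFin k
  | .inr k => pOmegaBlp k

/-- The Steinhaus–Moser functions `m_α` for `α < ω + ω`, with `Sum.inl k ↦ m_k` and
`Sum.inr k ↦ m_{ω+k}`. -/
def mSM : ℕ ⊕ ℕ → ℕ → ℕ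
  | .inl k => mSMfin k
  | .inr k => mSMomega k

/-- The canonical blp `p_α` for `α < ε₀`, built from the pattern sequence `ps(α)`. -/
def pOf (o : ONote) : Blp :=
  ⟨[[0, 1, 2], [0, 1, 2, 3]] ++
     (List.range (psO o).length).map (fun j =>
       if (psO o).getD j 0 = 0 then [0, 1, 2, j + 3, j + 4]
       else [0, 1, 2, (psO o).getD j 0 + 2, j + 3, j + 4]),
   [1, 1] ++ (psO o).map (fun t => if t = 0 then 2 else 3)⟩

/-! ## Knuth arrows and Graham's number -/

/-- Knuth's up-arrow: `knuth m a b = a ↑^m b` (with `↑^0` multiplication and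
`↑^1` exponentiation). -/
def knuth : ℕ → ℕ → ℕ → ℕ
  | 0, a, b => a * b
  | 1, a, b => a ^ b
  | _ + 2, _, 0 => 1
  | m + 2, a, b + 1 => knuth (m + 1) a (knuth (m + 2) a b)
  termination_by m _ b => (m, b)

/-- `grahamSeq k = g_{k+1}`: `g_1 = 3↑↑↑↑3`, `g_{k+1} = 3 ↑^{g_k} 3`. -/
def grahamSeq : ℕ → ℕ
  | 0 => knuth 4 3 3
  | k + 1 => knuth (grahamSeq k) 3 3

/-- Graham's number `G = g_64`. -/
def grahamNumber : ℕ := grahamSeq 63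


open Ordinal ONote

lemma predO_ofNat_succ (m : ℕ) : predO (ONote.oadd 0 ⟨m+1, Nat.succ_pos m⟩ .zero) = ofNat m := by
  simp [predO]

lemma ofNat_succ_add_one (m : ℕ) : ofNat m + 1 = ONote.oadd 0 ⟨m+1, Nat.succ_pos m⟩ .zero := by
  cases m with
  | zero => rfl
  | succ m =>
    show ONote.add (ofNat (m+1)) 1 = _
    simp only [ofNat]
    show addAux 0 _ (ONote.add 0 1) = _
    show addAux 0 _ 1 = _
    rfl

/-- A1 : for NF successor notations, `predO` is a genuine predecessor. -/
lemma predO_spec : ∀ o : ONote, o.NF → isSuccO o = true →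
    (predO o).NF ∧ predO o + 1 = o := by
  intro o
  induction o with
  | zero => intro _ h; simp [isSuccO] at h
  | oadd e c a ihe iha =>
    intro hNF hs
    cases a with
    | zero =>
      have he : e = 0 := by simpa [isSuccO] using hs
      subst he
      obtain ⟨m, hm⟩ : ∃ m, (c : ℕ) = m + 1 := ⟨(c : ℕ) - 1, (Nat.succ_pred_eq_of_pos c.pos).symm⟩
      have hc : c = ⟨m+1, Nat.succ_pos m⟩ := PNat.coe_injective hm
      subst hc
      rw [show predO (ONote.oadd 0 ⟨m+1, Nat.succ_pos m⟩ .zero) = ofNat m from predO_ofNat_succ m]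
      exact ⟨inferInstance, ofNat_succ_add_one m⟩
    | oadd e' c' a' =>
      have hs' : isSuccO (ONote.oadd e' c' a') = true := hs
      obtain ⟨hnf', heq⟩ := iha hNF.snd hs'
      have hblt : ONote.repr (predO (ONote.oadd e' c' a')) ≤ ONote.repr (ONote.oadd e' c' a') := by
        conv_rhs => rw [← heq]
        rw [ONote.repr_add]
        exact le_self_add
      have hbel : NFBelow (predO (ONote.oadd e' c' a')) (ONote.repr e) :=
        hnf'.below_of_lt' (lt_of_le_of_lt hblt hNF.snd'.repr_lt)
      have hnfo : (ONote.oadd e c (predO (ONote.oadd e' c' a'))).NF :=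
        hNF.fst.oadd c hbel
      refine ⟨hnfo, ?_⟩
      show addAux e c (predO (ONote.oadd e' c' a') + 1) = _
      rw [heq]
      have hee' : ONote.cmp e e' = Ordering.gt := by
        have h1 : ONote.repr e' < ONote.repr e := by
          have h3 := hNF.snd'.repr_lt
          have h2 : ω ^ ONote.repr e' ≤ ONote.repr (ONote.oadd e' c' a') :=
            omega0_le_oadd e' c' a'
          exact (opow_lt_opow_iff_right one_lt_omega0).mp (lt_of_le_of_lt h2 h3)
        have hcc := @ONote.cmp_compares e e' hNF.fst hNF.snd.fst
        cases h : ONote.cmp e e' <;> rw [h] at hcc <;>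
          first
          | rfl
          | exact absurd (lt_def.mp hcc) (asymm h1)
          | exact absurd hcc (by rintro rfl; exact lt_irrefl _ h1)
      show addAux e c (ONote.oadd e' c' a') = _
      simp [addAux, hee']

lemma repr_pos (e c a) : 0 < ONote.repr (ONote.oadd e c a) := by
  simpa [lt_def] using oadd_pos e c a

lemma repr_ne_zero {o : ONote} (ho : o.NF) (h0 : o ≠ 0) : ONote.repr o ≠ 0 := by
  cases o with
  | zero => exact absurd rfl h0
  | oadd e c a => exact (repr_pos e c a).ne'

lemma predO_repr {o : ONote} (ho : o.NF) (hs : isSuccO o = true) :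
    ONote.repr (predO o) + 1 = ONote.repr o := by
  obtain ⟨h1, h2⟩ := predO_spec o ho hs
  conv_rhs => rw [← h2]
  rw [@ONote.repr_add _ _ h1 inferInstance]
  simp

lemma predO_repr_lt {o : ONote} (ho : o.NF) (hs : isSuccO o = true) :
    ONote.repr (predO o) < ONote.repr o := by
  rw [← predO_repr ho hs, Ordinal.add_one_eq_succ]; exact Order.lt_succ _

/-- A2 : NF non-successor nonzero notations denote limit ordinals. -/
lemma repr_isLimit : ∀ o : ONote, o.NF → o ≠ 0 → isSuccO o = false →
    Order.IsSuccLimit (ONote.repr o) := by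
  intro o
  induction o with
  | zero => intro _ h; exact absurd rfl h
  | oadd e c a ihe iha =>
    intro hNF _ hs
    cases a with
    | zero =>
      have he : e ≠ 0 := by simpa [isSuccO] using hs
      have h1 : Order.IsSuccLimit (ω ^ ONote.repr e) :=
        isSuccLimit_opow_left isSuccLimit_omega0 (repr_ne_zero hNF.fst he)
      have h2 : Order.IsSuccLimit ((ω ^ ONote.repr e) * c) :=
        isSuccLimit_mul_left h1 (by exact_mod_cast c.pos)
      simpa using h2
    | oadd e' c' a' =>
      have hs' : isSuccO (ONote.oadd e' c' a') = false := hs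
      have := iha hNF.snd (fun h => ONote.noConfusion h) hs'
      exact isSuccLimit_add _ this

/-- B : fundamental sequence values are NF and strictly below. -/
lemma fsO_spec : ∀ o : ONote, o.NF → o ≠ 0 → isSuccO o = false → ∀ k,
    (fsO o k).NF ∧ ONote.repr (fsO o k) < ONote.repr o := by
  intro o
  induction o with
  | zero => intro _ h; exact absurd rfl h
  | oadd e c a ihe iha =>
    intro hNF _ hs k
    cases a with
    | zero =>
      have he : e ≠ 0 := by simpa [isSuccO] using hs
      -- the auxiliary term t
      set t : ONote :=
        if e = ONote.zero then .zero
        else if isSuccO e then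
          (if h : k = 0 then .zero else .oadd (predO e) ⟨k, Nat.pos_of_ne_zero h⟩ .zero)
        else .oadd (fsO e k) 1 .zero with ht
      have hfs : fsO (ONote.oadd e c .zero) k = if c = 1 then t else .oadd e (c - 1) t := rfl
      have key : t.NF ∧ ONote.repr t < ω ^ ONote.repr e := by
        rw [ht, if_neg (show ¬ e = ONote.zero by simpa using he)]
        by_cases hse : isSuccO e
        · rw [if_pos hse]
          by_cases hk : k = 0
          · rw [dif_pos hk]
            exact ⟨NF.zero, by simpa using opow_pos _ omega0_pos⟩
          · rw [dif_neg hk]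
            obtain ⟨hp, _⟩ := predO_spec e hNF.fst hse
            refine ⟨hp.oadd _ NFBelow.zero, ?_⟩
            have hee : ONote.repr (predO e) + 1 = ONote.repr e := predO_repr hNF.fst hse
            calc ω ^ ONote.repr (predO e) * (⟨k, Nat.pos_of_ne_zero hk⟩ : ℕ+) + ONote.repr ONote.zero
                < ω ^ ONote.repr (predO e) * ω := by
                  simpa using (mul_lt_mul_of_pos_left (nat_lt_omega0 k) (opow_pos _ omega0_pos))
              _ = ω ^ ONote.repr e := by rw [← hee, opow_add, opow_one]
        · rw [if_neg hse]
          obtain ⟨h1, h2⟩ := ihe hNF.fst he (by simpa using hse) k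
          refine ⟨h1.oadd _ NFBelow.zero, ?_⟩
          simpa using (opow_lt_opow_iff_right one_lt_omega0).mpr h2
      have hec : ω ^ ONote.repr e ≤ ONote.repr (ONote.oadd e c .zero) := by
        simpa using omega0_le_oadd e c .zero
      rw [hfs]
      by_cases hc : c = 1
      · rw [if_pos hc]
        exact ⟨key.1, lt_of_lt_of_le key.2 hec⟩
      · rw [if_neg hc]
        have hc2 : 2 ≤ (c : ℕ) := by
          rcases Nat.lt_or_ge (c : ℕ) 2 with h | h
          · have h1 : (c : ℕ) = 1 := by have := c.pos; omega
            exact absurd (PNat.coe_eq_one_iff.mp h1) hc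
          · exact h
        have hcoe : ((c - 1 : ℕ+) : ℕ) = (c : ℕ) - 1 := by
          rw [PNat.sub_coe, if_pos (show (1:ℕ+) < c by rw [← PNat.coe_lt_coe]; exact hc2)]
          rfl
        constructor
        · exact hNF.fst.oadd _ (key.1.below_of_lt' key.2)
        · show ω ^ ONote.repr e * ((c - 1 : ℕ+) : ℕ) + ONote.repr t
              < ω ^ ONote.repr e * (c : ℕ) + ONote.repr ONote.zero
          have : ω ^ ONote.repr e * ((c - 1 : ℕ+) : ℕ) + ω ^ ONote.repr e
              = ω ^ ONote.repr e * (c : ℕ) := by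
            rw [← mul_add_one, hcoe]
            congr 1
            have : ((c : ℕ) - 1 : ℕ) + 1 = (c : ℕ) := by omega
            exact_mod_cast congrArg (fun n : ℕ => (n : Ordinal.{0})) this
          calc ω ^ ONote.repr e * ((c - 1 : ℕ+) : ℕ) + ONote.repr t
              < ω ^ ONote.repr e * ((c - 1 : ℕ+) : ℕ) + ω ^ ONote.repr e :=
                (add_lt_add_iff_left _).mpr key.2
            _ = ω ^ ONote.repr e * (c : ℕ) := this
            _ ≤ _ := by simp
    | oadd e' c' a' =>
      have hs' : isSuccO (ONote.oadd e' c' a') = false := hs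
      obtain ⟨h1, h2⟩ := iha hNF.snd (fun h => ONote.noConfusion h) hs' k
      have hfs : fsO (ONote.oadd e c (.oadd e' c' a')) k
          = .oadd e c (fsO (.oadd e' c' a') k) := rfl
      rw [hfs]
      constructor
      · exact hNF.fst.oadd _ (h1.below_of_lt' (lt_trans h2 hNF.snd'.repr_lt))
      · exact (add_lt_add_iff_left _).mpr h2

/-! ### The reachability relation `Below` -/

inductive Below (n : ℕ) : ONote → ONote → Prop
  | refl (a) : Below n a a
  | succ {a b} : isSuccO a = true → Below n b (predO a) → Below n b a
  | lim {a b} (k : ℕ) : k ≤ n → a ≠ 0 → isSuccO a = false → Below n b (fsO a k) → Below n b a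

lemma Below.trans {n : ℕ} {a b c : ONote} (h1 : Below n b c) (h2 : Below n c a) :
    Below n b a := by
  induction h2 with
  | refl => exact h1
  | succ hs _ ih => exact Below.succ hs (ih h1)
  | lim k hk h0 hs _ ih => exact Below.lim k hk h0 hs (ih h1)

lemma Below.mono {n m : ℕ} (hnm : n ≤ m) {a b : ONote} (h : Below n b a) : Below m b a := by
  induction h with
  | refl => exact Below.refl _
  | succ hs _ ih => exact Below.succ hs ih
  | lim k hk h0 hs _ ih => exact Below.lim k (le_trans hk hnm) h0 hs ih

/-- A `Below` chain can be lifted into the tail of an `oadd`. -/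
lemma Below.tailLift {n : ℕ} {t b : ONote} (e : ONote) (c : ℕ+) (h : Below n b t) :
    Below n (ONote.oadd e c b) (ONote.oadd e c t) := by
  induction h with
  | refl => exact Below.refl _
  | @succ a' b' hs _ ih =>
    cases a' with
    | zero => simp [isSuccO] at hs
    | oadd e2 c2 a2 =>
      exact Below.succ (show isSuccO (ONote.oadd e c (.oadd e2 c2 a2)) = true from hs) ih
  | @lim a' b' k hk h0 hs _ ih =>
    cases a' with
    | zero => exact absurd rfl h0
    | oadd e2 c2 a2 =>
      refine Below.lim k hk (fun h => ONote.noConfusion h)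
        (show isSuccO (ONote.oadd e c (.oadd e2 c2 a2)) = false from hs) ih

lemma isSuccO_ne_zero {a : ONote} (h : isSuccO a = true) : a ≠ 0 := by
  cases a with
  | zero => simp [isSuccO] at h
  | oadd => exact fun h => ONote.noConfusion h

/-- A `Below` chain can be lifted to exponents (for `n ≥ 1`). -/
lemma Below.expLift {n : ℕ} (hn : 1 ≤ n) {t b : ONote} (h : Below n b t) :
    Below n (ONote.oadd b 1 .zero) (ONote.oadd t 1 .zero) := by
  induction h with
  | refl => exact Below.refl _
  | @succ a' b' hs _ ih =>
    have ha0 : a' ≠ 0 := isSuccO_ne_zero hs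
    have hfs : fsO (ONote.oadd a' 1 .zero) 1 = ONote.oadd (predO a') 1 .zero := by
      show (if a' = ONote.zero then _ else _) = _
      rw [if_neg (by simpa using ha0), if_pos hs]
      rfl
    have hss : isSuccO (ONote.oadd a' 1 .zero) = false := by
      show decide (a' = ONote.zero) = false
      simpa using ha0
    exact Below.lim 1 hn (fun h => ONote.noConfusion h) hss (hfs ▸ ih)
  | @lim a' b' k hk h0 hs _ ih =>
    have hfs : fsO (ONote.oadd a' 1 .zero) k = ONote.oadd (fsO a' k) 1 .zero := by
      show (if a' = ONote.zero then _ else _) = _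
      rw [if_neg (by simpa using h0), if_neg (by simp [hs])]
    have hss : isSuccO (ONote.oadd a' 1 .zero) = false := by
      show decide (a' = ONote.zero) = false
      simpa using h0
    exact Below.lim k hk (fun h => ONote.noConfusion h) hss (hfs ▸ ih)

/-- Every NF notation reaches `0` using steps of index `0`. -/
lemma below_zero_aux : ∀ o : Ordinal, ∀ a : ONote, a.NF → ONote.repr a = o → Below 0 0 a := by
  intro o
  induction o using Ordinal.induction with
  | _ o IH =>
  rintro a hNF rfl
  cases a with
  | zero => exact Below.refl _
  | oadd e c t =>
    by_cases hs : isSuccO (ONote.oadd e c t)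
    · obtain ⟨h1, _⟩ := predO_spec _ hNF hs
      exact Below.succ hs (IH _ (predO_repr_lt hNF hs) _ h1 rfl)
    · have hs' : isSuccO (ONote.oadd e c t) = false := by simpa using hs
      obtain ⟨h1, h2⟩ := fsO_spec _ hNF (fun h => ONote.noConfusion h) hs' 0
      exact Below.lim 0 le_rfl (fun h => ONote.noConfusion h) hs' (IH _ h2 _ h1 rfl)

lemma below_zero (a : ONote) (h : a.NF) : Below 0 0 a := below_zero_aux _ a h rfl

/-- The auxiliary term in the definition of `fsO` at `oadd e c 0`. -/
def tAux (e : ONote) (j : ℕ) : ONote :=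
  if e = ONote.zero then .zero
  else if isSuccO e then
    (if h : j = 0 then .zero else .oadd (predO e) ⟨j, Nat.pos_of_ne_zero h⟩ .zero)
  else .oadd (fsO e j) 1 .zero

lemma fsO_oadd_zero (e : ONote) (c : ℕ+) (j : ℕ) :
    fsO (ONote.oadd e c .zero) j = if c = 1 then tAux e j else .oadd e (c - 1) (tAux e j) := rfl

/-- Bachmann property for the canonical fundamental sequences. -/
lemma below_fs_succ : ∀ o : ONote, o.NF → o ≠ 0 → isSuccO o = false → ∀ k n : ℕ,
    k ≤ n → 1 ≤ n → Below n (fsO o k) (fsO o (k + 1)) := by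
  intro o
  induction o with
  | zero => intro _ h; exact absurd rfl h
  | oadd e c a ihe iha =>
    intro hNF _ hs k n hk hn
    cases a with
    | oadd e' c' a' =>
      have hs' : isSuccO (ONote.oadd e' c' a') = false := hs
      exact Below.tailLift e c (iha hNF.snd (fun h => ONote.noConfusion h) hs' k n hk hn)
    | zero =>
      have he : e ≠ 0 := by simpa [isSuccO] using hs
      have he' : ¬ e = ONote.zero := by simpa using he
      have Tkey : Below n (tAux e k) (tAux e (k + 1)) := by
        by_cases hse : isSuccO e
        · have ht1 : tAux e (k+1) = .oadd (predO e) ⟨k+1, Nat.succ_pos k⟩ .zero := by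
            rw [tAux, if_neg he', if_pos hse, dif_neg (Nat.succ_ne_zero k)]
          by_cases hp : predO e = 0
          · rw [ht1, hp]
            have hsucc : isSuccO (ONote.oadd 0 ⟨k+1, Nat.succ_pos k⟩ .zero) = true := by
              simp [isSuccO]
            have hpred : predO (ONote.oadd 0 ⟨k+1, Nat.succ_pos k⟩ .zero) = ofNat k := by
              show (if (0:ONote) = ONote.zero then ofNat ((⟨k+1, Nat.succ_pos k⟩:ℕ+) - 1)
                else _) = _
              rw [if_pos (show (0:ONote) = ONote.zero from rfl)]
              norm_num
            refine Below.succ hsucc ?_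
            rw [hpred]
            cases k with
            | zero => rw [tAux, if_neg he', if_pos hse, dif_pos rfl]; exact Below.refl _
            | succ m =>
              rw [tAux, if_neg he', if_pos hse, dif_neg (Nat.succ_ne_zero m), hp]
              exact Below.refl _
          · cases k with
            | zero =>
              rw [ht1]
              rw [tAux, if_neg he', if_pos hse, dif_pos rfl]
              have hnf : (ONote.oadd (predO e) ⟨1, Nat.one_pos⟩ .zero).NF :=
                (predO_spec e hNF.fst hse).1.oadd _ NFBelow.zero
              exact (below_zero _ hnf).mono (Nat.zero_le n)
            | succ m =>
              rw [ht1, tAux, if_neg he', if_pos hse, dif_neg (Nat.succ_ne_zero m)]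
              have hpnf : (predO e).NF := (predO_spec e hNF.fst hse).1
              have hslim : isSuccO (ONote.oadd (predO e) ⟨m+2, Nat.succ_pos _⟩ .zero) = false := by
                show decide (predO e = ONote.zero) = false
                simpa using hp
              refine Below.lim 0 (Nat.zero_le n) (fun h => ONote.noConfusion h) hslim ?_
              have hne1 : (⟨m+2, Nat.succ_pos _⟩ : ℕ+) ≠ 1 := by
                intro h
                have := congrArg (fun x : ℕ+ => (x : ℕ)) h
                revert this; show m + 2 = 1 → False; omega
              have hfs0 : fsO (ONote.oadd (predO e) ⟨m+2, Nat.succ_pos _⟩ .zero) 0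
                  = .oadd (predO e) ⟨m+1, Nat.succ_pos _⟩ (tAux (predO e) 0) := by
                show (if (⟨m+2, Nat.succ_pos _⟩ : ℕ+) = 1 then tAux (predO e) 0
                  else .oadd (predO e) (@HSub.hSub ℕ+ ℕ+ ℕ+ _ ⟨m+2, Nat.succ_pos _⟩ 1) (tAux (predO e) 0)) = _
                rw [if_neg hne1]
                rfl
              rw [hfs0]
              by_cases hsp : isSuccO (predO e)
              · have : tAux (predO e) 0 = .zero := by
                  rw [tAux, if_neg (by simpa using hp), if_pos hsp, dif_pos rfl]
                rw [this]
                exact Below.refl _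
              · have hsp' : isSuccO (predO e) = false := by simpa using hsp
                have : tAux (predO e) 0 = .oadd (fsO (predO e) 0) 1 .zero := by
                  rw [tAux, if_neg (by simpa using hp), if_neg (by simp [hsp'])]
                have hnf2 : (ONote.oadd (fsO (predO e) 0) 1 .zero).NF :=
                  ((fsO_spec (predO e) hpnf hp hsp' 0).1).oadd _ NFBelow.zero
                rw [this]
                exact Below.tailLift _ _ ((below_zero _ hnf2).mono (Nat.zero_le n))
        · have hse' : isSuccO e = false := by simpa using hse
          have h1 : tAux e k = .oadd (fsO e k) 1 .zero := by
            rw [tAux, if_neg he', if_neg (by simp [hse'])]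
          have h2 : tAux e (k+1) = .oadd (fsO e (k+1)) 1 .zero := by
            rw [tAux, if_neg he', if_neg (by simp [hse'])]
          rw [h1, h2]
          exact Below.expLift hn (ihe hNF.fst he hse' k n hk hn)
      rw [fsO_oadd_zero, fsO_oadd_zero]
      by_cases hc : c = 1
      · rw [if_pos hc, if_pos hc]; exact Tkey
      · rw [if_neg hc, if_neg hc]; exact Below.tailLift e (c-1) Tkey

/-- Chaining the Bachmann property. -/
lemma below_fs_le (o : ONote) (hNF : o.NF) (h0 : o ≠ 0) (hs : isSuccO o = false)
    {k n : ℕ} (hk : k ≤ n) (hn : 1 ≤ n) : Below n (fsO o k) (fsO o n) := by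
  have H : ∀ d k, k + d = n → Below n (fsO o k) (fsO o n) := by
    intro d
    induction d with
    | zero =>
      intro k hkd
      rw [show k = n by omega]
      exact Below.refl _
    | succ d ih =>
      intro k hkd
      exact (below_fs_succ o hNF h0 hs k n (by omega) hn).trans (ih (k+1) (by omega))
  exact H (n - k) k (by omega)

lemma predO_oadd_oadd (e : ONote) (c : ℕ+) (e' : ONote) (c' : ℕ+) (a' : ONote) :
    predO (ONote.oadd e c (.oadd e' c' a')) = .oadd e c (predO (.oadd e' c' a')) := rfl

lemma predO_repr_lt' : ∀ o : ONote, isSuccO o = true →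
    ONote.repr (predO o) < ONote.repr o := by
  intro o
  induction o with
  | zero => intro h; simp [isSuccO] at h
  | oadd e c a ihe iha =>
    intro hs
    cases a with
    | zero =>
      have he : e = 0 := by simpa [isSuccO] using hs
      subst he
      show ONote.repr (if (0:ONote) = ONote.zero then ofNat ((c:ℕ) - 1) else _) < _
      rw [if_pos (show (0:ONote) = ONote.zero from rfl), repr_ofNat]
      have : ((c:ℕ) - 1 : Ordinal) < (c:ℕ) := by
        have := c.pos
        exact_mod_cast Nat.sub_lt this Nat.one_pos
      simpa using this
    | oadd e' c' a' =>
      have hs' : isSuccO (ONote.oadd e' c' a') = true := hs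
      rw [predO_oadd_oadd]
      exact (add_lt_add_iff_left _).mpr (iha hs')

noncomputable def mfun (o : ONote) : ℕ → ℕ :=
  if h0 : o = 0 then fun n => n ^ n
  else if hs : isSuccO o then fun n => (fun x => mfun (predO o) x)^[n] n
  else if hNF : o.NF then fun n => mfun (fsO o n) n
  else fun _ => 0
termination_by ONote.repr o
decreasing_by
  · exact predO_repr_lt' o hs
  · exact (fsO_spec o hNF h0 (by simpa using hs) n).2

lemma mfun_zero (n : ℕ) : mfun 0 n = n ^ n := by
  rw [mfun]
  simp

lemma mfun_succ (o : ONote) (hs : isSuccO o = true) (n : ℕ) :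
    mfun o n = (fun x => mfun (predO o) x)^[n] n := by
  rw [mfun, dif_neg (isSuccO_ne_zero hs), dif_pos hs]

lemma mfun_limit (o : ONote) (h0 : o ≠ 0) (hs : isSuccO o = false) (hNF : o.NF) (n : ℕ) :
    mfun o n = mfun (fsO o n) n := by
  rw [mfun, dif_neg h0, dif_neg (by simp [hs]), dif_pos hNF]

lemma miter_of {q : ONote} {f : ℕ → ℕ} (h : ∀ x, MRel q x (f x)) (k x : ℕ) :
    MIter q k x (f^[k] x) := by
  induction k with
  | zero => exact MIter.base q x
  | succ k ih =>
    rw [Function.iterate_succ_apply']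
    exact MIter.step q k x _ _ ih (h _)

/-- `mfun` realizes the relation `MRel` on NF notations. -/
lemma mrel_mfun_aux : ∀ i : Ordinal, ∀ o : ONote, o.NF → ONote.repr o = i →
    ∀ n, MRel o n (mfun o n) := by
  intro i
  induction i using Ordinal.induction with
  | _ i IH =>
  rintro o hNF rfl n
  by_cases h0 : o = 0
  · subst h0; rw [mfun_zero]; exact MRel.zero n
  by_cases hs : isSuccO o
  · rw [mfun_succ o hs]
    obtain ⟨hp, heq⟩ := predO_spec o hNF hs
    have hlt := predO_repr_lt hNF hs
    have H := MRel.succ (predO o) n _ (miter_of (fun x => IH _ hlt _ hp rfl x) n n)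
    rw [heq] at H
    exact H
  · have hs' : isSuccO o = false := by simpa using hs
    rw [mfun_limit o h0 hs' hNF]
    obtain ⟨h1, h2⟩ := fsO_spec o hNF h0 hs' n
    exact MRel.limit o n _ (repr_isLimit o hNF h0 hs') (IH _ h2 _ h1 rfl n)

lemma mrel_mfun (o : ONote) (hNF : o.NF) (n : ℕ) : MRel o n (mfun o n) :=
  mrel_mfun_aux _ o hNF rfl n

/-! ### Arithmetic facts about iterates -/

section IterFacts
variable {g : ℕ → ℕ}
  (hlb : ∀ x, 2 ≤ x → x + 1 ≤ g x)
  (hmono : ∀ x y, 2 ≤ x → x ≤ y → g x ≤ g y)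

include hlb in
lemma iter_lb : ∀ k x, 2 ≤ x → x + k ≤ g^[k] x := by
  intro k
  induction k with
  | zero => simp
  | succ k ih =>
    intro x hx
    rw [Function.iterate_succ_apply']
    have h1 := ih x hx
    have h2 := hlb (g^[k] x) (by omega)
    omega

include hlb hmono in
lemma iter_mono_arg : ∀ k x y, 2 ≤ x → x ≤ y → g^[k] x ≤ g^[k] y := by
  intro k
  induction k with
  | zero => simp
  | succ k ih =>
    intro x y hx hxy
    rw [Function.iterate_succ_apply', Function.iterate_succ_apply']
    exact hmono _ _ (by have := iter_lb hlb k x hx; omega) (ih x y hx hxy)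

include hlb hmono in
lemma iter_ge_one_step : ∀ k x, 1 ≤ k → 2 ≤ x → g x ≤ g^[k] x := by
  intro k
  induction k with
  | zero => omega
  | succ k ih =>
    intro x _ hx
    rcases Nat.eq_zero_or_pos k with hk | hk
    · subst hk; simp
    · rw [Function.iterate_succ_apply']
      calc g x ≤ g (g^[k] x) := hmono _ _ hx (by have := iter_lb hlb k x hx; omega)
        _ = _ := rfl

end IterFacts

/-! ### The main monotonicity result -/

/-- Combined statement proved by well-founded induction. -/
lemma main_aux : ∀ i : Ordinal, ∀ o : ONote, o.NF → ONote.repr o = i →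
    (∀ n, 2 ≤ n → n + 1 ≤ mfun o n ∧ mfun o n < mfun o (n + 1)) ∧
    (∀ n, 2 ≤ n → ∀ b, Below n b o → mfun b n ≤ mfun o n) := by
  intro i
  induction i using Ordinal.induction with
  | _ i IH =>
  rintro o hNF rfl
  by_cases h0 : o = 0
  · subst h0
    constructor
    · intro n hn
      constructor
      · rw [mfun_zero]
        have h1 : n + 1 ≤ n * n := by nlinarith
        have h2 : n * n ≤ n ^ n := by
          rw [← pow_two]
          exact Nat.pow_le_pow_right (by omega) hn
        omega
      · rw [mfun_zero, mfun_zero]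
        calc n ^ n < (n+1) ^ n := Nat.pow_lt_pow_left (by omega) (by omega)
          _ ≤ (n+1) ^ (n+1) := Nat.pow_le_pow_right (by omega) (by omega)
    · intro n hn b hb
      cases hb with
      | refl => exact le_refl _
      | succ hs _ => simp [isSuccO] at hs
      | lim k hk h0' hs _ => exact absurd rfl h0'
  by_cases hs : isSuccO o
  · -- successor case
    obtain ⟨hp, heq⟩ := predO_spec o hNF hs
    have hlt := predO_repr_lt hNF hs
    obtain ⟨Hmono, HD⟩ := IH _ hlt _ hp rfl
    set g : ℕ → ℕ := mfun (predO o) with hg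
    have glb : ∀ x, 2 ≤ x → x + 1 ≤ g x := fun x hx => (Hmono x hx).1
    have gmono : ∀ x y, 2 ≤ x → x ≤ y → g x ≤ g y := by
      intro x y hx hxy
      obtain ⟨d, rfl⟩ : ∃ d, y = x + d := ⟨y - x, by omega⟩
      clear hxy
      induction d with
      | zero => exact le_refl _
      | succ d ih =>
        calc g x ≤ g (x + d) := ih
          _ ≤ g (x + d + 1) := le_of_lt (Hmono (x+d) (by omega)).2
    have hmo : ∀ m, mfun o m = g^[m] m := fun m => mfun_succ o hs m
    constructor
    · intro n hn
      constructor
      · rw [hmo]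
        have := iter_lb glb n n hn
        omega
      · rw [hmo, hmo]
        have h1 : g^[n+1] n ≤ g^[n+1] (n+1) :=
          iter_mono_arg glb gmono (n+1) n (n+1) hn (by omega)
        have h2 : g^[n] n < g^[n+1] n := by
          rw [Function.iterate_succ_apply']
          have := glb (g^[n] n) (by have := iter_lb glb n n hn; omega)
          omega
        omega
    · intro n hn b hb
      cases hb with
      | refl => exact le_refl _
      | succ hs' hb' =>
        have h1 : mfun b n ≤ g n := HD n hn b hb'
        have h2 : g n ≤ g^[n] n := iter_ge_one_step glb gmono n n (by omega) hn
        rw [hmo]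
        omega
      | lim k hk h0' hs' _ => rw [hs] at hs'; exact Bool.noConfusion hs'
  · -- limit case
    have hs' : isSuccO o = false := by simpa using hs
    have hfs := fsO_spec o hNF h0 hs'
    have hlim := repr_isLimit o hNF h0 hs'
    constructor
    · intro n hn
      have hn1 : 1 ≤ n := by omega
      obtain ⟨M1, _⟩ := IH _ (hfs n).2 _ (hfs n).1 rfl
      obtain ⟨M2, D2⟩ := IH _ (hfs (n+1)).2 _ (hfs (n+1)).1 rfl
      constructor
      · rw [mfun_limit o h0 hs' hNF]
        exact (M1 n hn).1
      · rw [mfun_limit o h0 hs' hNF, mfun_limit o h0 hs' hNF]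
        have h1 : mfun (fsO o n) n ≤ mfun (fsO o (n+1)) n :=
          D2 n hn _ (below_fs_succ o hNF h0 hs' n n le_rfl hn1)
        have h2 : mfun (fsO o (n+1)) n < mfun (fsO o (n+1)) (n+1) := (M2 n hn).2
        omega
    · intro n hn b hb
      have hn1 : 1 ≤ n := by omega
      cases hb with
      | refl => exact le_refl _
      | succ hs2 _ => rw [hs'] at hs2; exact Bool.noConfusion hs2
      | lim k hk h02 hs2 hb' =>
        have chain : Below n (fsO o k) (fsO o n) := below_fs_le o hNF h0 hs' hk hn1
        have total : Below n b (fsO o n) := hb'.trans chain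
        obtain ⟨_, D1⟩ := IH _ (hfs n).2 _ (hfs n).1 rfl
        rw [mfun_limit o h0 hs' hNF]
        exact D1 n hn b total


/-- For all `α < ε₀` and `n ≥ 2`, `m(α, n+1) > m(α, n)` and
`m(α, n) ≥ n + 1`. -/
theorem m_strict_mono_and_lb :
    ∀ o : ONote, o.NF → ∀ n : ℕ, 2 ≤ n →
      ∃ a b : ℕ, MRel o (n + 1) a ∧ MRel o n b ∧ b < a ∧ n + 1 ≤ b := by
  intro o hNF n hn
  obtain ⟨Hmono, _⟩ := main_aux _ o hNF rfl
  exact ⟨mfun o (n+1), mfun o n, mrel_mfun o hNF (n+1), mrel_mfun o hNF n,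
    (Hmono n hn).2, (Hmono n hn).1⟩
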